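/- arXiv:2407.06869 — 4 statements merged into one kernel-verified Lean document; each statement's English description precedes it below -/
import Mathlib

section
/- Let $\pi_1, \pi_2, \pi_3, \pi_4$ be four distinct permutations of $\{1,2,3,4\}$ with permutation matrices $A_{\pi_1},\ldots,A_{\pi_4}$, and let $t_1,t_2,t_3,t_4$ be real numbers, not all zero, such that $t_1 A_{\pi_1} + t_2 A_{\pi_2} + t_3 A_{\pi_3} + t_4 A_{\pi_4}$ is the zero matrix. Then all four coefficients $t_i$ are non-zero, exactly two are positive and two are negative, and (after relabeling so that $t_1, t_2 > 0$) one has $t_1 = t_2 = -t_3 = -t_4$, so that $A_{\pi_1} + A_{\pi_2} - A_{\pi_3} - A_{\pi_4}$ is the zero matrix. -/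
open Matrix Finset

/-- The permutation matrix of a permutation `π` of `Fin k`:
entry `1` at `(i, π i)` and `0` elsewhere. -/
def permMat {k : ℕ} (π : Equiv.Perm (Fin k)) : Matrix (Fin k) (Fin k) ℝ :=
  Matrix.of fun i j => if π i = j then (1 : ℝ) else 0

lemma exists_ne_pt (p q : Equiv.Perm (Fin 4)) (h : p ≠ q) : ∃ x, p x ≠ q x := by
  by_contra hc
  push_neg at hc
  exact h (Equiv.ext hc)

lemma two_indep (p q : Equiv.Perm (Fin 4)) (hpq : p ≠ q) (u v : ℝ)
    (h : ∀ x y : Fin 4, (if p x = y then u else 0) + (if q x = y then v else 0) = 0) :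
    u = 0 ∧ v = 0 := by
  obtain ⟨x, hx⟩ := exists_ne_pt p q hpq
  have h1 := h x (p x)
  have h2 := h x (q x)
  simp [hx, hx.symm] at h1 h2
  exact ⟨h1, h2⟩

lemma three_indep (p q r : Equiv.Perm (Fin 4)) (hpq : p ≠ q) (hpr : p ≠ r) (hqr : q ≠ r)
    (u v w : ℝ)
    (h : ∀ x y : Fin 4, (if p x = y then u else 0) + (if q x = y then v else 0) +
      (if r x = y then w else 0) = 0) :
    u = 0 ∧ v = 0 ∧ w = 0 := by
  obtain ⟨x, hx⟩ := exists_ne_pt p q hpq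
  by_cases hr : r x = p x
  · -- v = 0 from entry (x, q x)
    have hrq : r x ≠ q x := by rw [hr]; exact hx
    have h1 := h x (q x)
    simp [hx, hx.symm, hrq] at h1
    have h2 := two_indep p r hpr u w (fun x y => by
      have e := h x y
      rw [h1, ite_self] at e
      linarith)
    exact ⟨h2.1, h1, h2.2⟩
  · -- u = 0 from entry (x, p x)
    have h1 := h x (p x)
    simp [hx, hx.symm, hr] at h1
    have h2 := two_indep q r hqr v w (fun x y => by
      have e := h x y
      rw [h1, ite_self] at e
      linarith)
    exact ⟨h1, h2.1, h2.2⟩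

lemma pair_up (p₀ p₁ p₂ p₃ : Equiv.Perm (Fin 4)) (h01 : p₀ ≠ p₁) (a b c d : ℝ)
    (ha : a ≠ 0) (hb : b ≠ 0)
    (h : ∀ x y : Fin 4, (if p₀ x = y then a else 0) + (if p₁ x = y then b else 0) +
      (if p₂ x = y then c else 0) + (if p₃ x = y then d else 0) = 0) :
    (a + c = 0 ∧ b + d = 0) ∨ (a + d = 0 ∧ b + c = 0) := by
  obtain ⟨x, hx⟩ := exists_ne_pt p₀ p₁ h01
  by_cases h2 : p₂ x = p₀ x <;> by_cases h3 : p₃ x = p₀ x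
  · -- both agree with p₀ at x : then b = 0, contradiction
    have e := h x (p₁ x)
    have h2' : p₂ x ≠ p₁ x := by rw [h2]; exact hx
    have h3' : p₃ x ≠ p₁ x := by rw [h3]; exact hx
    simp [hx, hx.symm, h2', h3'] at e
    exact absurd e hb
  · -- p₂ with p₀, so p₃ must pair with p₁
    left
    have e0 := h x (p₀ x)
    simp [hx, hx.symm, h2, h3] at e0
    refine ⟨e0, ?_⟩
    have e1 := h x (p₁ x)
    have h2' : p₂ x ≠ p₁ x := by rw [h2]; exact hx
    by_cases h3' : p₃ x = p₁ x
    · simp [hx, hx.symm, h2', h3'] at e1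
      linarith
    · simp [hx, hx.symm, h2', h3'] at e1
      exact absurd e1 hb
  · -- p₃ with p₀, so p₂ must pair with p₁
    right
    have e0 := h x (p₀ x)
    simp [hx, hx.symm, h2, h3] at e0
    refine ⟨e0, ?_⟩
    have e1 := h x (p₁ x)
    have h3' : p₃ x ≠ p₁ x := by rw [h3]; exact hx
    by_cases h2' : p₂ x = p₁ x
    · simp [hx, hx.symm, h2', h3'] at e1
      linarith
    · simp [hx, hx.symm, h2', h3'] at e1
      exact absurd e1 hb
  · -- nothing agrees with p₀ at x : a = 0, contradiction
    have e := h x (p₀ x)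
    simp [hx, hx.symm, h2, h3] at e
    exact absurd e ha

/-- If `π₁, π₂, π₃, π₄` are four distinct permutations of `{1,2,3,4}` and `t₁,…,t₄` are
non-trivial reals with `t₁A_{π₁} + t₂A_{π₂} + t₃A_{π₃} + t₄A_{π₄} = 0`, then all `tᵢ` are
non-zero, and after relabeling (via a permutation `σ` of the indices) the first two are
positive and `t₁ = t₂ = -t₃ = -t₄`, so `A_{π₁} + A_{π₂} - A_{π₃} - A_{π₄} = 0`. -/
theorem zero_combination_of_four_permMatrices
    (π : Fin 4 → Equiv.Perm (Fin 4)) (hπ : Function.Injective π)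
    (t : Fin 4 → ℝ) (ht : ∃ i, t i ≠ 0)
    (hsum : ∑ i, t i • permMat (π i) = 0) :
    (∀ i, t i ≠ 0) ∧
    ∃ σ : Equiv.Perm (Fin 4),
      0 < t (σ 0) ∧ 0 < t (σ 1) ∧
      t (σ 0) = t (σ 1) ∧ t (σ 2) = -t (σ 0) ∧ t (σ 3) = -t (σ 0) ∧
      permMat (π (σ 0)) + permMat (π (σ 1)) - permMat (π (σ 2)) - permMat (π (σ 3)) = 0 := by
  have E : ∀ x y : Fin 4, (if π 0 x = y then t 0 else 0) + (if π 1 x = y then t 1 else 0) +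
      (if π 2 x = y then t 2 else 0) + (if π 3 x = y then t 3 else 0) = 0 := by
    intro x y
    have h := congrFun (congrFun hsum x) y
    simp only [Matrix.sum_apply, Matrix.smul_apply, Matrix.zero_apply, permMat,
      Matrix.of_apply, smul_eq_mul, mul_ite, mul_one, mul_zero, Fin.sum_univ_four] at h
    linarith
  have ne01 : π 0 ≠ π 1 := hπ.ne (by decide)
  have ne02 : π 0 ≠ π 2 := hπ.ne (by decide)
  have ne03 : π 0 ≠ π 3 := hπ.ne (by decide)
  have ne12 : π 1 ≠ π 2 := hπ.ne (by decide)
  have ne13 : π 1 ≠ π 3 := hπ.ne (by decide)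
  have ne23 : π 2 ≠ π 3 := hπ.ne (by decide)
  -- Step 1: all coefficients are non-zero
  have hnz : ∀ i, t i ≠ 0 := by
    intro i hti
    have hall : ∀ j, t j = 0 := by
      fin_cases i
      · have h0 : t 0 = 0 := hti
        obtain ⟨e1, e2, e3⟩ := three_indep (π 1) (π 2) (π 3) ne12 ne13 ne23 (t 1) (t 2) (t 3)
          (fun x y => by have e := E x y; rw [h0, ite_self] at e; linarith)
        intro j; fin_cases j <;> assumption
      · have h0 : t 1 = 0 := hti
        obtain ⟨e1, e2, e3⟩ := three_indep (π 0) (π 2) (π 3) ne02 ne03 ne23 (t 0) (t 2) (t 3)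
          (fun x y => by have e := E x y; rw [h0, ite_self] at e; linarith)
        intro j; fin_cases j <;> assumption
      · have h0 : t 2 = 0 := hti
        obtain ⟨e1, e2, e3⟩ := three_indep (π 0) (π 1) (π 3) ne01 ne03 ne13 (t 0) (t 1) (t 3)
          (fun x y => by have e := E x y; rw [h0, ite_self] at e; linarith)
        intro j; fin_cases j <;> assumption
      · have h0 : t 3 = 0 := hti
        obtain ⟨e1, e2, e3⟩ := three_indep (π 0) (π 1) (π 2) ne01 ne02 ne12 (t 0) (t 1) (t 2)
          (fun x y => by have e := E x y; rw [h0, ite_self] at e; linarith)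
        intro j; fin_cases j <;> assumption
    obtain ⟨j, hj⟩ := ht
    exact hj (hall j)
  refine ⟨hnz, ?_⟩
  -- Step 2: pair up the coefficients in three ways
  have hP1 := pair_up (π 0) (π 1) (π 2) (π 3) ne01 (t 0) (t 1) (t 2) (t 3)
    (hnz 0) (hnz 1) E
  have hP2 := pair_up (π 0) (π 2) (π 1) (π 3) ne02 (t 0) (t 2) (t 1) (t 3)
    (hnz 0) (hnz 2) (fun x y => by have e := E x y; linarith)
  have hP3 := pair_up (π 0) (π 3) (π 1) (π 2) ne03 (t 0) (t 3) (t 1) (t 2)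
    (hnz 0) (hnz 3) (fun x y => by have e := E x y; linarith)
  -- Step 3: the coefficient pattern
  have pat : (t 1 = t 0 ∧ t 2 = -t 0 ∧ t 3 = -t 0) ∨
      (t 2 = t 0 ∧ t 1 = -t 0 ∧ t 3 = -t 0) ∨
      (t 3 = t 0 ∧ t 1 = -t 0 ∧ t 2 = -t 0) := by
    rcases hP1 with ⟨e1, e2⟩ | ⟨e1, e2⟩ <;> rcases hP2 with ⟨f1, f2⟩ | ⟨f1, f2⟩ <;>
      rcases hP3 with ⟨g1, g2⟩ | ⟨g1, g2⟩ <;>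
      first
        | exact Or.inl ⟨by linarith, by linarith, by linarith⟩
        | exact Or.inr (Or.inl ⟨by linarith, by linarith, by linarith⟩)
        | exact Or.inr (Or.inr ⟨by linarith, by linarith, by linarith⟩)
  rw [Fin.sum_univ_four] at hsum
  rcases pat with ⟨h1, h2, h3⟩ | ⟨h1, h2, h3⟩ | ⟨h1, h2, h3⟩
  · -- partner is 1
    have M0 : permMat (π 0) + permMat (π 1) - permMat (π 2) - permMat (π 3) = 0 := by
      rw [h1, h2, h3] at hsum
      have hs : t 0 • (permMat (π 0) + permMat (π 1) - permMat (π 2) - permMat (π 3)) = 0 := by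
        rw [← hsum]; module
      exact (smul_eq_zero.mp hs).resolve_left (hnz 0)
    rcases (hnz 0).lt_or_gt with hneg | hpos
    · refine ⟨⟨![2,3,0,1], ![2,3,0,1], by decide, by decide⟩, ?_, ?_, ?_, ?_, ?_, ?_⟩
      · show 0 < t 2; rw [h2]; linarith
      · show 0 < t 3; rw [h3]; linarith
      · show t 2 = t 3; rw [h2, h3]
      · show t 0 = -t 2; rw [h2]; ring
      · show t 1 = -t 2; rw [h1, h2]; ring
      · show permMat (π 2) + permMat (π 3) - permMat (π 0) - permMat (π 1) = 0
        have : permMat (π 2) + permMat (π 3) - permMat (π 0) - permMat (π 1) =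
            -(permMat (π 0) + permMat (π 1) - permMat (π 2) - permMat (π 3)) := by abel
        rw [this, M0, neg_zero]
    · refine ⟨Equiv.refl _, hpos, ?_, ?_, ?_, ?_, M0⟩
      · show 0 < t 1; rw [h1]; exact hpos
      · show t 0 = t 1; rw [h1]
      · show t 2 = -t 0; rw [h2]
      · show t 3 = -t 0; rw [h3]
  · -- partner is 2
    have M0 : permMat (π 0) + permMat (π 2) - permMat (π 1) - permMat (π 3) = 0 := by
      rw [h1, h2, h3] at hsum
      have hs : t 0 • (permMat (π 0) + permMat (π 2) - permMat (π 1) - permMat (π 3)) = 0 := by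
        rw [← hsum]; module
      exact (smul_eq_zero.mp hs).resolve_left (hnz 0)
    rcases (hnz 0).lt_or_gt with hneg | hpos
    · refine ⟨⟨![1,3,0,2], ![2,0,3,1], by decide, by decide⟩, ?_, ?_, ?_, ?_, ?_, ?_⟩
      · show 0 < t 1; rw [h2]; linarith
      · show 0 < t 3; rw [h3]; linarith
      · show t 1 = t 3; rw [h2, h3]
      · show t 0 = -t 1; rw [h2]; ring
      · show t 2 = -t 1; rw [h1, h2]; ring
      · show permMat (π 1) + permMat (π 3) - permMat (π 0) - permMat (π 2) = 0
        have : permMat (π 1) + permMat (π 3) - permMat (π 0) - permMat (π 2) =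
            -(permMat (π 0) + permMat (π 2) - permMat (π 1) - permMat (π 3)) := by abel
        rw [this, M0, neg_zero]
    · refine ⟨⟨![0,2,1,3], ![0,2,1,3], by decide, by decide⟩, hpos, ?_, ?_, ?_, ?_, ?_⟩
      · show 0 < t 2; rw [h1]; exact hpos
      · show t 0 = t 2; rw [h1]
      · show t 1 = -t 0; rw [h2]
      · show t 3 = -t 0; rw [h3]
      · exact M0
  · -- partner is 3
    have M0 : permMat (π 0) + permMat (π 3) - permMat (π 1) - permMat (π 2) = 0 := by
      rw [h1, h2, h3] at hsum
      have hs : t 0 • (permMat (π 0) + permMat (π 3) - permMat (π 1) - permMat (π 2)) = 0 := by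
        rw [← hsum]; module
      exact (smul_eq_zero.mp hs).resolve_left (hnz 0)
    rcases (hnz 0).lt_or_gt with hneg | hpos
    · refine ⟨⟨![1,2,0,3], ![2,0,1,3], by decide, by decide⟩, ?_, ?_, ?_, ?_, ?_, ?_⟩
      · show 0 < t 1; rw [h2]; linarith
      · show 0 < t 2; rw [h3]; linarith
      · show t 1 = t 2; rw [h2, h3]
      · show t 0 = -t 1; rw [h2]; ring
      · show t 3 = -t 1; rw [h1, h2]; ring
      · show permMat (π 1) + permMat (π 2) - permMat (π 0) - permMat (π 3) = 0
        have : permMat (π 1) + permMat (π 2) - permMat (π 0) - permMat (π 3) =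
            -(permMat (π 0) + permMat (π 3) - permMat (π 1) - permMat (π 2)) := by abel
        rw [this, M0, neg_zero]
    · refine ⟨⟨![0,3,1,2], ![0,2,3,1], by decide, by decide⟩, hpos, ?_, ?_, ?_, ?_, ?_⟩
      · show 0 < t 3; rw [h1]; exact hpos
      · show t 0 = t 3; rw [h1]
      · show t 1 = -t 0; rw [h2]
      · show t 2 = -t 0; rw [h3]
      · exact M0
end

section
/- Define $g_1(s,t) = \frac{1}{786432}\big(51252 s^3 t^2 - 42648 s^3 t + 10530 s^3 + 24544 s^2 t^2 - 11950 s^2 t + 1927 s^2 + 43062 s t - 22600 s + 32343\big)$ and $g_2(s,t) = \frac{1}{786432}\big(180 s^3 t^2 - 1368 s^3 t + 7650 s^3 + 27248 s^2 t^2 - 43082 s^2 t - 2185 s^2 - 47742 s t + 33064 s + 32383\big)$. Then $\frac{\partial}{\partial s}(g_1(s,t)+g_2(s,t)) > 0$ for all $s,t \in [0,1]$. -/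
/-- The pattern density `g₁(s,t)` of `1234` from Section 7. -/
noncomputable def g₁ (s t : ℝ) : ℝ :=
  (1 / 786432) * (51252 * s ^ 3 * t ^ 2 - 42648 * s ^ 3 * t + 10530 * s ^ 3
    + 24544 * s ^ 2 * t ^ 2 - 11950 * s ^ 2 * t + 1927 * s ^ 2
    + 43062 * s * t - 22600 * s + 32343)

/-- The pattern density `g₂(s,t)` of `2143` from Section 7. -/
noncomputable def g₂ (s t : ℝ) : ℝ :=
  (1 / 786432) * (180 * s ^ 3 * t ^ 2 - 1368 * s ^ 3 * t + 7650 * s ^ 3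
    + 27248 * s ^ 2 * t ^ 2 - 43082 * s ^ 2 * t - 2185 * s ^ 2
    - 47742 * s * t + 33064 * s + 32383)

/-! The `s`-derivative of `g₁ + g₂` is a quadratic in `s` whose leading coefficient is positive
and whose discriminant is negative for every `t ∈ [0,1]`, so it is positive for all real `s`. -/

theorem quadratic_pos_of_discrim_neg {K : Type*} [CommRing K] [LinearOrder K]
    [IsStrictOrderedRing K] {a b c : K} (ha : 0 < a) (h : discrim a b c < 0) (x : K) :
    0 < a * (x * x) + b * x + c := by
  have hcomplete : 4 * a * (a * (x * x) + b * x + c) = (2 * a * x + b) ^ 2 - discrim a b c := by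
    rw [discrim]; ring
  have : 0 < 4 * a * (a * (x * x) + b * x + c) := by
    rw [hcomplete]; nlinarith [sq_nonneg (2 * a * x + b)]
  exact pos_of_mul_pos_right this (by positivity)

def sCoeff₃ (t : ℝ) : ℝ := 51432 * t ^ 2 - 44016 * t + 18180

def sCoeff₂ (t : ℝ) : ℝ := 51792 * t ^ 2 - 55032 * t - 258

def sCoeff₁ (t : ℝ) : ℝ := -4680 * t + 10464

lemma g₁_add_g₂_eq (s t : ℝ) :
    g₁ s t + g₂ s t =
      (sCoeff₃ t * s ^ 3 + sCoeff₂ t * s ^ 2 + sCoeff₁ t * s + 64726) / 786432 := by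
  simp only [g₁, g₂, sCoeff₃, sCoeff₂, sCoeff₁]; ring

lemma hasDerivAt_g₁_add_g₂ (s t : ℝ) :
    HasDerivAt (fun s => g₁ s t + g₂ s t)
      ((3 * sCoeff₃ t * (s * s) + 2 * sCoeff₂ t * s + sCoeff₁ t) / 786432) s := by
  simp only [g₁_add_g₂_eq]
  have := ((((hasDerivAt_pow 3 s).const_mul (sCoeff₃ t)).add
    ((hasDerivAt_pow 2 s).const_mul (sCoeff₂ t))).add
    ((hasDerivAt_id s).const_mul (sCoeff₁ t))).add_const 64726 |>.div_const 786432
  exact this.congr_deriv (by simp only [Nat.cast_ofNat]; ring)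

lemma sCoeff₃_pos (t : ℝ) : 0 < sCoeff₃ t := by
  unfold sCoeff₃; nlinarith [sq_nonneg (102864 * t - 44016)]

lemma discrim_sCoeff_neg {t : ℝ} (ht : t ∈ Set.Icc (0 : ℝ) 1) :
    discrim (3 * sCoeff₃ t) (2 * sCoeff₂ t) (sCoeff₁ t) < 0 := by
  obtain ⟨h0, h1⟩ := ht
  have hmid : 0 ≤ t * (1 - t) := mul_nonneg h0 (sub_nonneg.2 h1)
  rw [discrim]
  unfold sCoeff₃ sCoeff₂ sCoeff₁
  -- the discriminant comes closest to `0` near `t = 127/250`, where it is about `-4.1 * 10⁵`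
  nlinarith [mul_nonneg hmid (sq_nonneg (t - 127/250)), sq_nonneg (t - 127/250)]

/-- `∂/∂s (g₁(s,t) + g₂(s,t)) > 0` for all `s, t ∈ [0,1]`. -/
theorem deriv_g1_add_g2_pos :
    ∀ s ∈ Set.Icc (0 : ℝ) 1, ∀ t ∈ Set.Icc (0 : ℝ) 1,
      0 < deriv (fun s => g₁ s t + g₂ s t) s := by
  intro s _ t ht
  rw [(hasDerivAt_g₁_add_g₂ s t).deriv]
  have hquad :=
    quadratic_pos_of_discrim_neg (by linarith [sCoeff₃_pos t]) (discrim_sCoeff_neg ht) s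
  positivity
end

section
/- Define $g_1(s,t)$ and $g_2(s,t)$ as the explicit polynomials $g_1(s,t) = \frac{1}{786432}(51252 s^3 t^2 - 42648 s^3 t + 10530 s^3 + 24544 s^2 t^2 - 11950 s^2 t + 1927 s^2 + 43062 s t - 22600 s + 32343)$ and $g_2(s,t) = \frac{1}{786432}(180 s^3 t^2 - 1368 s^3 t + 7650 s^3 + 27248 s^2 t^2 - 43082 s^2 t - 2185 s^2 - 47742 s t + 33064 s + 32383)$. Then for every $t \in [0,1]$ there exists a unique $s \in [0,1]$ with $g_1(s,t) + g_2(s,t) = 1/12$. -/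
private lemma quartic_pos (t : ℝ) (h0 : 0 ≤ t) (h1 : t ≤ 1) :
    0 < -2682411264*t^4 + 4978329408*t^3 - 769258368*t^2 - 1665393984*t + 570639996 := by
  nlinarith [mul_nonneg (mul_nonneg h0 (sub_nonneg.2 h1)) (sq_nonneg (t - 127/250)),
    sq_nonneg (t - 127/250), sq_nonneg (t^2 - t + 1/8),
    mul_nonneg h0 (sq_nonneg (t - 127/250)),
    mul_nonneg (sub_nonneg.2 h1) (sq_nonneg (t - 127/250)),
    mul_nonneg h0 (sub_nonneg.2 h1)]

private lemma A_pos (t : ℝ) : 0 < 51432*t^2 - 44016*t + 18180 := by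
  nlinarith [sq_nonneg (102864*t - 44016)]

private lemma key (t a b : ℝ) (h0 : 0 ≤ t) (h1 : t ≤ 1) :
    0 < (51432*t^2 - 44016*t + 18180) * (a^2 + a*b + b^2)
      + (51792*t^2 - 55032*t - 258) * (a + b) + (-4680*t + 10464) := by
  have hA := A_pos t
  have hP := quartic_pos t h0 h1
  nlinarith [sq_nonneg (3*(51432*t^2 - 44016*t + 18180)*(a+b) + 2*(51792*t^2 - 55032*t - 258)),
    mul_nonneg (sq_nonneg (51432*t^2 - 44016*t + 18180)) (sq_nonneg (a-b)), hA, hP,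
    mul_pos hA hA]

private lemma mono (t : ℝ) (h0 : 0 ≤ t) (h1 : t ≤ 1) :
    StrictMonoOn (fun s => g₁ s t + g₂ s t) (Set.Icc (0:ℝ) 1) := by
  intro a _ b _ hab
  have h := mul_pos (sub_pos.2 hab) (key t a b h0 h1)
  simp only [g₁, g₂]
  nlinarith [h]

/-- For every `t ∈ [0,1]` there is a unique `s ∈ [0,1]` with `g₁(s,t) + g₂(s,t) = 1/12`. -/
theorem existsUnique_s_sum_eq :
    ∀ t ∈ Set.Icc (0 : ℝ) 1,
      ∃! s : ℝ, s ∈ Set.Icc (0 : ℝ) 1 ∧ g₁ s t + g₂ s t = 1 / 12 := by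
  intro t ht
  obtain ⟨h0, h1⟩ := ht
  set f : ℝ → ℝ := fun s => g₁ s t + g₂ s t with hf
  have hcont : Continuous f := by
    unfold f
    unfold g₁ g₂
    continuity
  have hf0 : f 0 ≤ 1/12 := by
    simp only [hf, g₁, g₂]
    norm_num
  have hf1 : 1/12 ≤ f 1 := by
    simp only [hf, g₁, g₂]
    nlinarith [sq_nonneg (206448*t - 103728)]
  have hiv := intermediate_value_Icc (by norm_num : (0:ℝ) ≤ 1) hcont.continuousOn
  obtain ⟨s, hs, hfs⟩ := hiv ⟨hf0, hf1⟩
  refine ⟨s, ⟨hs, hfs⟩, ?_⟩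
  rintro s' ⟨hs', hfs'⟩
  exact (mono t h0 h1).injOn hs' hs (by simp only [hf] at hfs; rw [hfs', hfs])
end

section
/- With $g_1,g_2$ the explicit polynomials $g_1(s,t) = \frac{1}{786432}(51252 s^3 t^2 - 42648 s^3 t + 10530 s^3 + 24544 s^2 t^2 - 11950 s^2 t + 1927 s^2 + 43062 s t - 22600 s + 32343)$ and $g_2(s,t) = \frac{1}{786432}(180 s^3 t^2 - 1368 s^3 t + 7650 s^3 + 27248 s^2 t^2 - 43082 s^2 t - 2185 s^2 - 47742 s t + 33064 s + 32383)$, there exist $s,t \in [0,1]$ with $g_1(s,t) = g_2(s,t) = 1/24$. -/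
/-!
For fixed `s`, the equation `g₁ s t = 1/24` is a quadratic in `t`; on `s ∈ [1/10, 1/5]` its
larger root `t₁ s` lies in `[0, 1]` and depends continuously on `s`. Along this curve
`g₂ - 1/24` is negative at `s = 1/10` and positive at `s = 1/5`, so the intermediate value
theorem produces the required point. At both endpoints the margin is large enough that
bracketing `t₁ s` in an interval of width `1/100` suffices.
-/

open Set

/-- The larger root of `a x² + b x + c` when `0 < a`. -/
noncomputable def upperRoot (a b c : ℝ) : ℝ := (-b + √(discrim a b c)) / (2 * a)

section upperRoot

variable {a b c : ℝ}

theorem upperRoot_isRoot (ha : a ≠ 0) (hd : 0 ≤ discrim a b c) :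
    a * (upperRoot a b c * upperRoot a b c) + b * upperRoot a b c + c = 0 :=
  (quadratic_eq_zero_iff ha (Real.mul_self_sqrt hd).symm _).2 (Or.inl rfl)

theorem discrim_nonneg_of_pos_of_nonpos (ha : 0 < a) (hc : c ≤ 0) : 0 ≤ discrim a b c := by
  unfold discrim
  nlinarith [sq_nonneg b]

theorem upperRoot_mem_Icc (ha : 0 < a) (hc : c ≤ 0) (h₁ : 0 ≤ a + b + c) :
    upperRoot a b c ∈ Icc 0 1 := by
  have hb : |b| ≤ √(discrim a b c) := by
    rw [← Real.sqrt_sq_eq_abs]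
    exact Real.sqrt_le_sqrt (by unfold discrim; nlinarith)
  have hsq : discrim a b c ≤ (2 * a + b) ^ 2 := by
    unfold discrim
    nlinarith
  have h2ab : √(discrim a b c) ≤ 2 * a + b :=
    Real.sqrt_le_iff.2 ⟨by linarith, hsq⟩
  unfold upperRoot
  constructor
  · exact div_nonneg (by linarith [le_abs_self b]) (by positivity)
  · rw [div_le_one (by positivity)]
    linarith

-- Both bounds come from `4 a (a x² + b x + c) = (2 a x + b)² - discrim a b c`.
theorem lt_upperRoot (ha : 0 < a) {x : ℝ} (hx : a * (x * x) + b * x + c < 0) :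
    x < upperRoot a b c := by
  have hlt : (2 * a * x + b) ^ 2 < discrim a b c := by
    unfold discrim
    nlinarith
  have hroot : |2 * a * x + b| < √(discrim a b c) :=
    (Real.lt_sqrt (abs_nonneg _)).2 (by rwa [sq_abs])
  unfold upperRoot
  rw [lt_div_iff₀ (by positivity)]
  linarith [le_abs_self (2 * a * x + b)]

theorem upperRoot_lt (ha : 0 < a) {x : ℝ} (hx : 0 < a * (x * x) + b * x + c)
    (hv : -b < 2 * a * x) : upperRoot a b c < x := by
  have hlt : discrim a b c < (2 * a * x + b) ^ 2 := by
    unfold discrim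
    nlinarith
  have hroot : √(discrim a b c) < 2 * a * x + b := (Real.sqrt_lt' (by linarith)).2 hlt
  unfold upperRoot
  rw [div_lt_iff₀ (by positivity)]
  linarith

theorem ContinuousOn.upperRoot {S : Set ℝ} {f g h : ℝ → ℝ} (hf : ContinuousOn f S)
    (hg : ContinuousOn g S) (hh : ContinuousOn h S) (hf₀ : ∀ s ∈ S, f s ≠ 0) :
    ContinuousOn (fun s => upperRoot (f s) (g s) (h s)) S := by
  unfold _root_.upperRoot discrim
  fun_prop (disch := simpa using hf₀)

end upperRoot

def a₁ (s : ℝ) : ℝ := 51252 * s ^ 3 + 24544 * s ^ 2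

def b₁ (s : ℝ) : ℝ := -42648 * s ^ 3 - 11950 * s ^ 2 + 43062 * s

def c₁ (s : ℝ) : ℝ := 10530 * s ^ 3 + 1927 * s ^ 2 - 22600 * s - 425

theorem g₁_sub_eq (s t : ℝ) :
    786432 * (g₁ s t - 1 / 24) = a₁ s * (t * t) + b₁ s * t + c₁ s := by
  unfold g₁ a₁ b₁ c₁
  ring

noncomputable def t₁ (s : ℝ) : ℝ := upperRoot (a₁ s) (b₁ s) (c₁ s)

section t₁

variable {s : ℝ} (hs : s ∈ Icc (1 / 10 : ℝ) (1 / 5))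
include hs

theorem a₁_pos : 0 < a₁ s := by
  obtain ⟨h₀, -⟩ := hs
  unfold a₁
  positivity

theorem c₁_nonpos : c₁ s ≤ 0 := by
  obtain ⟨h₀, h₁⟩ := hs
  unfold c₁
  nlinarith [pow_le_pow_left₀ (by linarith) h₁ 3, pow_le_pow_left₀ (by linarith) h₁ 2]

theorem a₁_add_b₁_add_c₁_nonneg : 0 ≤ a₁ s + b₁ s + c₁ s := by
  obtain ⟨h₀, -⟩ := hs
  unfold a₁ b₁ c₁
  nlinarith [pow_pos (by linarith : (0 : ℝ) < s) 3, pow_pos (by linarith : (0 : ℝ) < s) 2]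

theorem g₁_t₁ : g₁ s (t₁ s) = 1 / 24 := by
  have hroot : a₁ s * (t₁ s * t₁ s) + b₁ s * t₁ s + c₁ s = 0 :=
    upperRoot_isRoot (a₁_pos hs).ne' (discrim_nonneg_of_pos_of_nonpos (a₁_pos hs) (c₁_nonpos hs))
  rw [← g₁_sub_eq] at hroot
  linarith

theorem t₁_mem_Icc : t₁ s ∈ Icc 0 1 :=
  upperRoot_mem_Icc (a₁_pos hs) (c₁_nonpos hs) (a₁_add_b₁_add_c₁_nonneg hs)

end t₁

theorem continuousOn_t₁ : ContinuousOn t₁ (Icc (1 / 10) (1 / 5)) := by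
  unfold t₁ a₁ b₁ c₁
  exact ContinuousOn.upperRoot (by fun_prop) (by fun_prop) (by fun_prop)
    fun s hs => (a₁_pos hs).ne'

theorem g₂_t₁_left_lt : g₂ (1 / 10) (t₁ (1 / 10)) < 1 / 24 := by
  have ha : 0 < a₁ (1 / 10) := by norm_num [a₁]
  have hlo : 61 / 100 < t₁ (1 / 10) := lt_upperRoot ha (by norm_num [a₁, b₁, c₁])
  have hhi : t₁ (1 / 10) < 62 / 100 := upperRoot_lt ha (by norm_num [a₁, b₁, c₁]) (by norm_num [a₁, b₁])
  unfold g₂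
  nlinarith [mul_pos (sub_pos.2 hlo) (sub_pos.2 hhi)]

theorem lt_g₂_t₁_right : 1 / 24 < g₂ (1 / 5) (t₁ (1 / 5)) := by
  have ha : 0 < a₁ (1 / 5) := by norm_num [a₁]
  have hlo : 55 / 100 < t₁ (1 / 5) := lt_upperRoot ha (by norm_num [a₁, b₁, c₁])
  have hhi : t₁ (1 / 5) < 56 / 100 := upperRoot_lt ha (by norm_num [a₁, b₁, c₁]) (by norm_num [a₁, b₁])
  unfold g₂
  nlinarith [mul_pos (sub_pos.2 hlo) (sub_pos.2 hhi)]

/-- There exist `s, t ∈ [0,1]` with `g₁(s,t) = g₂(s,t) = 1/24`. -/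
theorem exists_s_t_densities_eq :
    ∃ s ∈ Set.Icc (0 : ℝ) 1, ∃ t ∈ Set.Icc (0 : ℝ) 1,
      g₁ s t = 1 / 24 ∧ g₂ s t = 1 / 24 := by
  have hcont : ContinuousOn (fun s => g₂ s (t₁ s)) (Icc (1 / 10) (1 / 5)) := by
    have := continuousOn_t₁
    unfold g₂
    fun_prop
  obtain ⟨s, hs, hg₂⟩ := intermediate_value_Icc (by norm_num) hcont
    ⟨g₂_t₁_left_lt.le, lt_g₂_t₁_right.le⟩
  have hs₀₁ : s ∈ Icc (0 : ℝ) 1 := Icc_subset_Icc (by norm_num) (by norm_num) hs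
  exact ⟨s, hs₀₁, t₁ s, t₁_mem_Icc hs, g₁_t₁ hs, hg₂⟩
end
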